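/- Let S, S* be index sets with supports of matrices X_S, X_{S*}, and suppose S ⊉ S*. Let P_S be the orthogonal projection onto the column space of X_S. If ℓ(s*) = min_{|T|=s*} λ_min(n^{-1}X_TᵀX_T) > 0 and all submatrices of size ≤ |S|+s* are full rank, then ‖(I - P_S)X_{S*}β*_{S*}‖² = ‖(I - P_S)X_{S*∩Sᶜ}β*_{S*∩Sᶜ}‖² ≥ n·ℓ·‖β*_{S*∩Sᶜ}‖² for a suitable restricted eigenvalue constant ℓ > 0. -/
import Mathlib


open Matrix

/-- Column submatrix `X_S` of `X` corresponding to the index set `S`. -/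
def colSubmatrix {n p : ℕ} (X : Matrix (Fin n) (Fin p) ℝ) (S : Finset (Fin p)) :
    Matrix (Fin n) S ℝ :=
  Matrix.of fun i j => X i j.1

/-- Orthogonal projection `P_S = X_S(X_SᵀX_S)⁻¹X_Sᵀ` onto the column space of `X_S`. -/
noncomputable def projS {n p : ℕ} (X : Matrix (Fin n) (Fin p) ℝ) (S : Finset (Fin p)) :
    Matrix (Fin n) (Fin n) ℝ :=
  colSubmatrix X S * ((colSubmatrix X S)ᵀ * colSubmatrix X S)⁻¹ * (colSubmatrix X S)ᵀ

/-- Smallest eigenvalue of a symmetric matrix, as the infimum of the Rayleigh quotient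
over unit vectors. -/
noncomputable def lamMin {ι : Type*} [Fintype ι] (M : Matrix ι ι ℝ) : ℝ :=
  sInf {r | ∃ v : ι → ℝ, (∑ i, v i ^ 2) = 1 ∧ r = v ⬝ᵥ (M *ᵥ v)}

lemma mulVec_support {n p : ℕ} (X : Matrix (Fin n) (Fin p) ℝ) (T : Finset (Fin p))
    (w : Fin p → ℝ) (hw : ∀ j ∉ T, w j = 0) :
    X *ᵥ w = colSubmatrix X T *ᵥ (fun j : T => w j.1) := by
  funext i
  simp only [mulVec, dotProduct, colSubmatrix, of_apply]
  rw [Finset.sum_coe_sort T (fun j => X i j * w j)]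
  exact (Finset.sum_subset (Finset.subset_univ T)
    (fun j _ hj => by rw [hw j hj, mul_zero])).symm

lemma proj_fix {n p : ℕ} (X : Matrix (Fin n) (Fin p) ℝ) (S : Finset (Fin p))
    (hpd : ((colSubmatrix X S)ᵀ * colSubmatrix X S).PosDef) (u : S → ℝ) :
    projS X S *ᵥ (colSubmatrix X S *ᵥ u) = colSubmatrix X S *ᵥ u := by
  have hdet : IsUnit ((colSubmatrix X S)ᵀ * colSubmatrix X S).det :=
    isUnit_iff_ne_zero.2 hpd.det_pos.ne'
  have key : projS X S * colSubmatrix X S = colSubmatrix X S := by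
    rw [projS, Matrix.mul_assoc (colSubmatrix X S * ((colSubmatrix X S)ᵀ * colSubmatrix X S)⁻¹),
      Matrix.mul_assoc (colSubmatrix X S), Matrix.nonsing_inv_mul _ hdet, Matrix.mul_one]
  rw [mulVec_mulVec, key]

lemma lamMin_le {ι : Type*} [Fintype ι] (M : Matrix ι ι ℝ) (v : ι → ℝ)
    (hv : (∑ i, v i ^ 2) = 1) : lamMin M ≤ v ⬝ᵥ (M *ᵥ v) := by
  apply csInf_le
  · refine ⟨-∑ i, ∑ j, |M i j|, ?_⟩
    rintro r ⟨u, hu, rfl⟩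
    have habs : ∀ i, |u i| ≤ 1 := by
      intro i
      rw [← sq_le_one_iff_abs_le_one]
      calc u i ^ 2 ≤ ∑ i, u i ^ 2 :=
            Finset.single_le_sum (fun i _ => sq_nonneg (u i)) (Finset.mem_univ i)
        _ = 1 := hu
    have : |u ⬝ᵥ (M *ᵥ u)| ≤ ∑ i, ∑ j, |M i j| := by
      simp only [dotProduct, mulVec]
      calc |∑ i, u i * ∑ j, M i j * u j| ≤ ∑ i, |u i * ∑ j, M i j * u j| :=
            Finset.abs_sum_le_sum_abs _ _
        _ ≤ ∑ i, ∑ j, |M i j| := by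
            apply Finset.sum_le_sum
            intro i _
            rw [abs_mul]
            calc |u i| * |∑ j, M i j * u j| ≤ 1 * ∑ j, |M i j * u j| := by
                  apply mul_le_mul (habs i) (Finset.abs_sum_le_sum_abs _ _)
                    (abs_nonneg _) zero_le_one
              _ = ∑ j, |M i j| * |u j| := by
                  rw [one_mul]; exact Finset.sum_congr rfl fun j _ => abs_mul _ _
              _ ≤ ∑ j, |M i j| * 1 := Finset.sum_le_sum fun j _ =>
                  mul_le_mul_of_nonneg_left (habs j) (abs_nonneg _)
              _ = ∑ j, |M i j| := by simp
    linarith [abs_le.1 this]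
  · exact ⟨v, hv, rfl⟩

/-- if `S ⊉ S*`, `β*` is supported on `S*`, `X_S` has full column rank and
`ℓ = λ_min(n⁻¹X_{S∪S*}ᵀX_{S∪S*}) > 0`, then writing `β'` for the part of `β*` on `S*∩Sᶜ`,
`‖(I-P_S)Xβ*‖² = ‖(I-P_S)Xβ'‖² ≥ n·ℓ·‖β'‖²`. -/
theorem stmt_13 (n p : ℕ) (X : Matrix (Fin n) (Fin p) ℝ)
    (S Sstar : Finset (Fin p)) (hns : ¬Sstar ⊆ S)
    (βstar : Fin p → ℝ) (hβ : ∀ j, j ∉ Sstar → βstar j = 0)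
    (βc : Fin p → ℝ) (hβc : ∀ j, βc j = if j ∈ S then 0 else βstar j)
    (hpdS : ((colSubmatrix X S)ᵀ * colSubmatrix X S).PosDef)
    (ell : ℝ)
    (hell : ell = lamMin (((n : ℝ)⁻¹) •
      ((colSubmatrix X (S ∪ Sstar))ᵀ * colSubmatrix X (S ∪ Sstar))))
    (hellpos : 0 < ell) :
    (∑ i, ((X *ᵥ βstar - projS X S *ᵥ (X *ᵥ βstar)) i) ^ 2)
        = (∑ i, ((X *ᵥ βc - projS X S *ᵥ (X *ᵥ βc)) i) ^ 2) ∧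
      (n : ℝ) * ell * ∑ j, (βc j) ^ 2
        ≤ ∑ i, ((X *ᵥ βstar - projS X S *ᵥ (X *ᵥ βstar)) i) ^ 2 := by
  set A := colSubmatrix X S with hAdef
  set B := colSubmatrix X (S ∪ Sstar) with hBdef
  -- the part of βstar supported on S
  set d : Fin p → ℝ := fun j => βstar j - βc j with hd
  have hd0 : ∀ j ∉ S, d j = 0 := by
    intro j hj; simp [hd, hβc j, if_neg hj]
  -- equality of residual vectors
  have heqvec : X *ᵥ βstar - projS X S *ᵥ (X *ᵥ βstar)
      = X *ᵥ βc - projS X S *ᵥ (X *ᵥ βc) := by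
    have hsplit : βstar = βc + d := by funext j; simp [hd]
    have hzero : X *ᵥ d - projS X S *ᵥ (X *ᵥ d) = 0 := by
      rw [mulVec_support X S d hd0, proj_fix X S hpdS, sub_self]
    rw [hsplit, Matrix.mulVec_add, Matrix.mulVec_add]
    have : X *ᵥ βc + X *ᵥ d - (projS X S *ᵥ (X *ᵥ βc) + projS X S *ᵥ (X *ᵥ d))
        = (X *ᵥ βc - projS X S *ᵥ (X *ᵥ βc)) + (X *ᵥ d - projS X S *ᵥ (X *ᵥ d)) := by
      abel
    rw [this, hzero, add_zero]
  refine ⟨by rw [heqvec], ?_⟩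
  rw [heqvec]
  -- write the residual as X *ᵥ w with w supported on S ∪ Sstar
  set α : S → ℝ := ((Aᵀ * A)⁻¹ * Aᵀ) *ᵥ (X *ᵥ βc) with hα
  set g : Fin p → ℝ := fun j => if h : j ∈ S then α ⟨j, h⟩ else 0 with hg
  set w : Fin p → ℝ := fun j => βc j - g j with hwdef
  have hXg : X *ᵥ g = A *ᵥ α := by
    rw [mulVec_support X S g (fun j hj => dif_neg hj)]
    congr 1
    funext j
    simp [hg, j.2]
  have hP : projS X S *ᵥ (X *ᵥ βc) = A *ᵥ α := by
    rw [projS, Matrix.mul_assoc, ← mulVec_mulVec]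
  have hw : X *ᵥ βc - projS X S *ᵥ (X *ᵥ βc) = X *ᵥ w := by
    have : X *ᵥ w = X *ᵥ βc - X *ᵥ g := by
      have : w = βc - g := rfl
      rw [this, Matrix.mulVec_sub]
    rw [this, hXg, hP]
  have hw0 : ∀ j ∉ S ∪ Sstar, w j = 0 := by
    intro j hj
    rw [Finset.mem_union] at hj
    push_neg at hj
    simp [hwdef, hg, hβc j, if_neg hj.1, dif_neg hj.1, hβ j hj.2]
  have hXw : X *ᵥ w = B *ᵥ (fun j : (S ∪ Sstar : Finset (Fin p)) => w j.1) :=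
    mulVec_support X (S ∪ Sstar) w hw0
  set wU : (S ∪ Sstar : Finset (Fin p)) → ℝ := fun j => w j.1 with hwU
  set Q : ℝ := wU ⬝ᵥ ((Bᵀ * B) *ᵥ wU) with hQ
  set t : ℝ := ∑ j, (wU j) ^ 2 with ht
  have hsum : ∑ i, ((X *ᵥ βc - projS X S *ᵥ (X *ᵥ βc)) i) ^ 2 = Q := by
    rw [hw, hXw, hQ, ← mulVec_mulVec, Matrix.dotProduct_mulVec, Matrix.vecMul_transpose]
    simp [dotProduct, sq]
  rw [hsum]
  -- Q is nonnegative
  have hQnn : 0 ≤ Q := by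
    rw [← hsum]
    exact Finset.sum_nonneg fun i _ => sq_nonneg _
  -- ∑ βc² ≤ t
  have hlow : ∑ j, (βc j) ^ 2 ≤ t := by
    have h1 : ∑ j, (βc j) ^ 2 = ∑ j ∈ Sstar \ S, (βc j) ^ 2 := by
      refine (Finset.sum_subset (Finset.subset_univ _) ?_).symm
      intro j _ hj
      rw [Finset.mem_sdiff] at hj
      push_neg at hj
      by_cases hjS : j ∈ S
      · simp [hβc j, if_pos hjS]
      · simp [hβc j, if_neg hjS, hβ j (fun h => hjS (hj h))]
    have h2 : ∀ j ∈ Sstar \ S, (βc j) ^ 2 = w j ^ 2 := by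
      intro j hj
      rw [Finset.mem_sdiff] at hj
      simp [hwdef, hg, dif_neg hj.2]
    have h3 : t = ∑ j ∈ S ∪ Sstar, w j ^ 2 := by
      rw [ht]
      exact Finset.sum_coe_sort (S ∪ Sstar) (fun j => w j ^ 2)
    rw [h1, Finset.sum_congr rfl h2, h3]
    exact Finset.sum_le_sum_of_subset_of_nonneg
      (fun j hj => Finset.mem_union_right _ (Finset.mem_sdiff.1 hj).1)
      (fun j _ _ => sq_nonneg _)
  have htnn : 0 ≤ t := Finset.sum_nonneg fun j _ => sq_nonneg _
  by_cases hn : n = 0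
  · subst hn
    have : ∑ j, (βc j) ^ 2 ≥ 0 := Finset.sum_nonneg fun j _ => sq_nonneg _
    simp only [Nat.cast_zero, zero_mul]
    exact hQnn
  by_cases ht0 : t = 0
  · have hb0 : ∑ j, (βc j) ^ 2 = 0 :=
      le_antisymm (by rw [← ht0]; exact hlow) (Finset.sum_nonneg fun j _ => sq_nonneg _)
    rw [hb0, mul_zero]
    exact hQnn
  have htpos : 0 < t := lt_of_le_of_ne htnn (Ne.symm ht0)
  have hnpos : (0 : ℝ) < n := by positivity
  -- the Rayleigh quotient bound
  set c : ℝ := (Real.sqrt t)⁻¹ with hc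
  have hc2 : c ^ 2 = t⁻¹ := by
    rw [hc, ← Real.sqrt_inv, Real.sq_sqrt (by positivity)]
  have hunit : ∑ j, (c * wU j) ^ 2 = 1 := by
    have : ∑ j, (c * wU j) ^ 2 = c ^ 2 * t := by
      rw [ht, Finset.mul_sum]
      exact Finset.sum_congr rfl fun j _ => by ring
    rw [this, hc2, inv_mul_cancel₀ ht0]
  have hray := lamMin_le (((n : ℝ)⁻¹) • (Bᵀ * B)) (fun j => c * wU j) hunit
  rw [← hell] at hray
  have hvs : (fun j => c * wU j) = c • wU := rfl
  rw [hvs] at hray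
  have hcomp : (c • wU) ⬝ᵥ ((((n : ℝ)⁻¹) • (Bᵀ * B)) *ᵥ (c • wU))
      = (n : ℝ)⁻¹ * (c ^ 2 * Q) := by
    rw [smul_mulVec, Matrix.mulVec_smul, smul_dotProduct, dotProduct_smul,
      dotProduct_smul, hQ, smul_eq_mul, smul_eq_mul, smul_eq_mul]
    ring
  rw [hcomp, hc2] at hray
  -- conclude
  have hkey : (n : ℝ) * ell * t ≤ Q := by
    have h := mul_le_mul_of_nonneg_left hray (le_of_lt (mul_pos hnpos htpos))
    calc (n : ℝ) * ell * t = (n : ℝ) * t * ell := by ring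
      _ ≤ (n : ℝ) * t * ((n : ℝ)⁻¹ * (t⁻¹ * Q)) := h
      _ = Q := by field_simp
  calc (n : ℝ) * ell * ∑ j, (βc j) ^ 2 ≤ (n : ℝ) * ell * t :=
        mul_le_mul_of_nonneg_left hlow (by positivity)
    _ ≤ Q := hkey
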